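/- Let A ∈ ℝmax^{n×n} have λ(A) ≠ −∞, and let 𝒞_1, …, 𝒞_l be the s.c.c.'s of the critical graph 𝒞(A), with node sets N_1, …, N_l. Let C, S, R be the CSR terms of A with respect to 𝒞(A). For ν = 2, …, l let A^{(ν)} be the matrix obtained from A by setting to −∞ all entries in the rows and columns indexed by N_1 ∪ ⋯ ∪ N_{ν−1}, and let C_ν, S_ν, R_ν be the CSR terms with respect to 𝒞_ν defined from A^{(ν)} with normalization by λ(A) (i.e., using M_ν = (((−λ(A))⊗A^{(ν)})^{γ(𝒞_ν)})^* and (S_ν)_{ij} = a^{(ν)}_{ij} − λ(A) on edges of 𝒞_ν); let C_1, S_1, R_1 be the CSR terms of A with respect to 𝒞_1. Then for all t ≥ 0, CS^tR = ⊕_{ν=1}^{l} C_ν S_ν^t R_ν (entrywise maximum). -/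

import Mathlib

open Classical

noncomputable section

namespace MaxPlus

/-- A square matrix over the max-plus semiring `ℝmax = ℝ ∪ {-∞}`,
represented as `WithBot ℝ` (with `⊥ = -∞`, `+` the usual addition). -/
abbrev MPMat (n : ℕ) := Fin n → Fin n → WithBot ℝ

variable {n : ℕ}

/-- Max-plus matrix multiplication: `(A⊗B)_{ij} = max_k (a_{ik} + b_{kj})`. -/
def mpMul (A B : MPMat n) : MPMat n := fun i j => Finset.univ.sup fun k => A i k + B k j

/-- Max-plus matrix power, with `A^0` the max-plus identity. -/
def mpPow (A : MPMat n) : ℕ → MPMat n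
  | 0 => fun i j => if i = j then (0 : WithBot ℝ) else ⊥
  | t + 1 => mpMul A (mpPow A t)

/-- Max-plus matrix-vector product. -/
def mpMulVec (A : MPMat n) (x : Fin n → WithBot ℝ) : Fin n → WithBot ℝ :=
  fun i => Finset.univ.sup fun k => A i k + x k

/-- A digraph on the node set `{1,…,n}`: a set of vertices together with an
edge relation. -/
structure SubD (n : ℕ) where
  verts : Set (Fin n)
  edge : Fin n → Fin n → Prop

/-- The weighted digraph `𝒟(A)` of a max-plus matrix: all `n` nodes, with an
edge `(i,j)` whenever `a_{ij} ≠ -∞`. -/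
def digr (A : MPMat n) : SubD n := ⟨Set.univ, fun i j => A i j ≠ ⊥⟩

/-- `W` (a nonempty list of nodes) is a walk in the digraph `G`. -/
def IsWalkIn (G : SubD n) (W : List (Fin n)) : Prop :=
  W ≠ [] ∧ (∀ v ∈ W, v ∈ G.verts) ∧ W.Chain' G.edge

/-- The length of a walk: its number of edges (number of nodes minus one). -/
def elen (W : List (Fin n)) : ℕ := W.length - 1

/-- The weight `p(W)` of a walk: sum of the weights of its edges. -/
def walkWeight (A : MPMat n) (W : List (Fin n)) : WithBot ℝ :=
  ((W.zip W.tail).map fun p => A p.1 p.2).sum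

/-- `W` is a cycle in `G`: a nonempty closed walk with pairwise distinct
nodes (apart from the repeated endpoint). -/
def IsCycleIn (G : SubD n) (W : List (Fin n)) : Prop :=
  IsWalkIn G W ∧ 2 ≤ W.length ∧ W.head? = W.getLast? ∧ W.dropLast.Nodup

/-- `W` is a path in `G`: a walk with no repeated node. -/
def IsPathIn (G : SubD n) (W : List (Fin n)) : Prop :=
  IsWalkIn G W ∧ W.Nodup

/-- `v` is reachable from `u` by a (possibly empty) walk in `G`. -/
def ReachIn (G : SubD n) (u v : Fin n) : Prop :=
  ∃ W, IsWalkIn G W ∧ W.head? = some u ∧ W.getLast? = some v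

/-- `u` and `v` lie in the same strongly connected component of `G`. -/
def SccEq (G : SubD n) (u v : Fin n) : Prop := ReachIn G u v ∧ ReachIn G v u

/-- The node set of the s.c.c. of `u` in `G`. -/
def sccOf (G : SubD n) (u : Fin n) : Set (Fin n) := {v | SccEq G u v}

/-- The s.c.c. of `u` in `G`, as a digraph. -/
def sccSub (G : SubD n) (u : Fin n) : SubD n :=
  ⟨sccOf G u, fun a b => G.edge a b ∧ a ∈ sccOf G u ∧ b ∈ sccOf G u⟩

/-- `H` is a subgraph of `G`. -/
def SubLE (H G : SubD n) : Prop := H.verts ⊆ G.verts ∧ ∀ u v, H.edge u v → G.edge u v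

/-- `G` is completely reducible: there are no edges between distinct s.c.c.'s,
i.e. every edge lies inside an s.c.c. -/
def CompletelyReducible (G : SubD n) : Prop := ∀ u v, G.edge u v → ReachIn G v u

/-- `G` has no trivial s.c.c.: every node lies on a cycle of `G`. -/
def NoTrivialScc (G : SubD n) : Prop := ∀ v ∈ G.verts, ∃ W, IsCycleIn G W ∧ v ∈ W

/-- `A` is irreducible: `𝒟(A)` is strongly connected. -/
def IrreducibleMat (A : MPMat n) : Prop := ∀ i j : Fin n, ReachIn (digr A) i j

/-- `W` is a closed walk at node `v` in `G`. -/
def IsClosedWalkAt (G : SubD n) (v : Fin n) (W : List (Fin n)) : Prop :=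
  IsWalkIn G W ∧ W.head? = some v ∧ W.getLast? = some v

/-- The greatest common divisor of a set of naturals (0 for the empty set). -/
def setGcd (S : Set ℕ) : ℕ :=
  sInf {d | (∀ s ∈ S, d ∣ s) ∧ ∀ e, (∀ s ∈ S, e ∣ s) → e ∣ d}

/-- The least common multiple of a set of naturals: the least positive common
multiple (0 if there is none). -/
def setLcm (S : Set ℕ) : ℕ := sInf {m | 0 < m ∧ ∀ s ∈ S, s ∣ m}

/-- The cyclicity of the s.c.c. of `v` in `G`: the gcd of the lengths of the
closed walks of `G` through `v` (0 if `v` lies on no nonempty closed walk). -/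
def sccCyclicity (G : SubD n) (v : Fin n) : ℕ :=
  setGcd {l | 0 < l ∧ ∃ W, IsClosedWalkAt G v W ∧ elen W = l}

/-- The cyclicity of a digraph: the lcm of the cyclicities of its
(nontrivial) s.c.c.'s. -/
def graphCyclicity (G : SubD n) : ℕ :=
  setLcm {c | ∃ v ∈ G.verts, c = sccCyclicity G v ∧ 0 < c}

/-- The walk `W` has mean weight `m`, i.e. `p(W) = l(W)·m` (finitely). -/
def meanIs (A : MPMat n) (W : List (Fin n)) (m : ℝ) : Prop :=
  walkWeight A W = (((elen W : ℝ) * m : ℝ) : WithBot ℝ)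

/-- `lam` is the maximum cycle mean `λ(A)` of `A`: it is the mean of some
cycle of `𝒟(A)` and no cycle has a larger mean.  (Its existence is
equivalent to `𝒟(A)` containing a cycle, i.e. `λ(A) ≠ -∞`.) -/
def IsMaxCycleMean (A : MPMat n) (lam : ℝ) : Prop :=
  (∃ W, IsCycleIn (digr A) W ∧ meanIs A W lam) ∧
  ∀ W m, IsCycleIn (digr A) W → meanIs A W m → m ≤ lam

/-- The set of critical nodes: nodes on some cycle of mean `λ(A)`. -/
def critNodes (A : MPMat n) (lam : ℝ) : Set (Fin n) :=
  {v | ∃ W, IsCycleIn (digr A) W ∧ meanIs A W lam ∧ v ∈ W}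

/-- Critical edges: edges of some cycle of mean `λ(A)`. -/
def critEdges (A : MPMat n) (lam : ℝ) (u v : Fin n) : Prop :=
  ∃ W, IsCycleIn (digr A) W ∧ meanIs A W lam ∧ (u, v) ∈ W.zip W.tail

/-- The critical graph `𝒞(A)`. -/
def critSub (A : MPMat n) (lam : ℝ) : SubD n := ⟨critNodes A lam, critEdges A lam⟩

/-- Add the real constant `c` to every entry. -/
def shiftMat (A : MPMat n) (c : ℝ) : MPMat n := fun i j => A i j + (c : WithBot ℝ)

/-- The max-plus Kleene star `X^* = I ⊕ X ⊕ X² ⊕ ⋯` (entrywise supremum). -/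
def mpStar (X : MPMat n) : MPMat n := fun i j => ⨆ t : ℕ, mpPow X t i j

/-- The matrix `M = (((-λ)⊗A)^{γ(𝒢)})^*` used to define the CSR terms. -/
def csrM (A : MPMat n) (lam : ℝ) (G : SubD n) : MPMat n :=
  mpStar (mpPow (shiftMat A (-lam)) (graphCyclicity G))

/-- The `C` term of the CSR expansion of `A` w.r.t. the subgraph `G`. -/
def csrC (A : MPMat n) (lam : ℝ) (G : SubD n) : MPMat n :=
  fun i j => if j ∈ G.verts then csrM A lam G i j else ⊥

/-- The `R` term of the CSR expansion of `A` w.r.t. the subgraph `G`. -/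
def csrR (A : MPMat n) (lam : ℝ) (G : SubD n) : MPMat n :=
  fun i j => if i ∈ G.verts then csrM A lam G i j else ⊥

/-- The `S` term of the CSR expansion of `A` w.r.t. the subgraph `G`. -/
def csrS (A : MPMat n) (lam : ℝ) (G : SubD n) : MPMat n :=
  fun i j => if G.edge i j then A i j + ((-lam : ℝ) : WithBot ℝ) else ⊥

/-- The matrix `C S^t R`. -/
def csr (A : MPMat n) (lam : ℝ) (G : SubD n) (t : ℕ) : MPMat n :=
  mpMul (mpMul (csrC A lam G) (mpPow (csrS A lam G) t)) (csrR A lam G)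

/-- `G` is a representing subgraph of the critical graph `crit`: a completely
reducible subgraph (with no trivial s.c.c.) such that every s.c.c. of `crit`
contains exactly one s.c.c. of `G`. -/
structure IsRepresenting (crit G : SubD n) : Prop where
  le : SubLE G crit
  compRed : CompletelyReducible G
  noTriv : NoTrivialScc G
  covers : ∀ u ∈ crit.verts, ∃ v ∈ G.verts, SccEq crit u v
  unique : ∀ v ∈ G.verts, ∀ w ∈ G.verts, SccEq crit v w → SccEq G v w

/-- `B` is subordinate to `A`: obtained from `A` by setting some entries to `-∞`. -/
def Subordinate (B A : MPMat n) : Prop := ∀ i j, B i j = A i j ∨ B i j = ⊥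

/-- Set to `-∞` all entries in the rows and columns indexed by `S`. -/
def zeroRC (A : MPMat n) (S : Set (Fin n)) : MPMat n :=
  fun i j => if i ∈ S ∨ j ∈ S then ⊥ else A i j

/-- The Nachtigall scheme: zero out the rows and columns of critical nodes. -/
def bN (A : MPMat n) (lam : ℝ) : MPMat n := zeroRC A (critNodes A lam)

/-- `V` is a max-balancing of `A`: `V = D⁻¹((-λ(A))⊗A)D` with all entries `≤ 0`,
entries `0` on critical edges, and every edge of `𝒟(V)` lies on a cycle all of
whose edges have weight at least that of the given edge (cycle cover). -/
def IsMaxBalancing (A : MPMat n) (lam : ℝ) (V : MPMat n) : Prop :=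
  (∃ d : Fin n → ℝ, ∀ i j, V i j = A i j + ((d j - d i - lam : ℝ) : WithBot ℝ)) ∧
  (∀ i j, V i j ≤ (0 : WithBot ℝ)) ∧
  (∀ i j, critEdges A lam i j → V i j = (0 : WithBot ℝ)) ∧
  (∀ i j, V i j ≠ ⊥ →
    ∃ W, IsCycleIn (digr V) W ∧ (i, j) ∈ W.zip W.tail ∧ ∀ p ∈ W.zip W.tail, V i j ≤ V p.1 p.2)

/-- The Hartmann-Arguelles threshold graph `Θ^{ha}(μ)`: induced by the edges
with `v_{ij} ≥ μ`; by convention `Θ^{ha}(-∞) = 𝒟(A)`. -/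
def thrHA (A V : MPMat n) (μ : WithBot ℝ) : SubD n :=
  if μ = ⊥ then digr A
  else ⟨{u | ∃ w, μ ≤ V u w ∨ μ ≤ V w u}, fun u v => μ ≤ V u v⟩

/-- The cycle threshold graph `Θ^{ct}(μ)`: induced by all nodes and edges of
cycles of mean weight `≥ μ`; by convention `Θ^{ct}(-∞) = 𝒟(A)`. -/
def thrCT (A : MPMat n) (μ : WithBot ℝ) : SubD n :=
  if μ = ⊥ then digr A
  else ⟨{v | ∃ W m, IsCycleIn (digr A) W ∧ meanIs A W m ∧ μ ≤ (m : WithBot ℝ) ∧ v ∈ W},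
        fun u v => ∃ W m, IsCycleIn (digr A) W ∧ meanIs A W m ∧ μ ≤ (m : WithBot ℝ) ∧
          (u, v) ∈ W.zip W.tail⟩

/-- `Θ` has an s.c.c. containing no s.c.c. of `crit`. -/
def HasFreeScc (Θ crit : SubD n) : Prop :=
  ∃ u ∈ Θ.verts, ¬ ∃ w ∈ crit.verts, sccOf crit w ⊆ sccOf Θ u

/-- `μ` is the greatest value `≤ λ(A)` satisfying `P` (or `-∞` if there is
no such value). -/
def IsThrMax (P : WithBot ℝ → Prop) (lam : ℝ) (μ : WithBot ℝ) : Prop :=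
  (μ ≤ (lam : WithBot ℝ) ∧ P μ ∧ ∀ μ', μ' ≤ (lam : WithBot ℝ) → P μ' → μ' ≤ μ) ∨
  (μ = ⊥ ∧ ∀ μ', μ' ≤ (lam : WithBot ℝ) → ¬ P μ')

/-- `μ = μ^{ha}` for the max-balancing `V` of `A`. -/
def IsMuHA (A : MPMat n) (lam : ℝ) (V : MPMat n) (μ : WithBot ℝ) : Prop :=
  IsThrMax (fun m => HasFreeScc (thrHA A V m) (critSub A lam)) lam μ

/-- `μ = μ^{ct}` for `A`. -/
def IsMuCT (A : MPMat n) (lam : ℝ) (μ : WithBot ℝ) : Prop :=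
  IsThrMax (fun m => HasFreeScc (thrCT A m) (critSub A lam)) lam μ

/-- The union of the s.c.c.'s of `Θ` intersecting the node set `crit`. -/
def unionSccMeeting (Θ : SubD n) (crit : Set (Fin n)) : Set (Fin n) :=
  {v | v ∈ Θ.verts ∧ ∃ w ∈ crit, SccEq Θ v w}

/-- The node set `𝒢^{ha}` of the Hartmann-Arguelles scheme. -/
def haNodes (A V : MPMat n) (lam : ℝ) (μ : WithBot ℝ) : Set (Fin n) :=
  unionSccMeeting (thrHA A V μ) (critNodes A lam)

/-- The matrix `B^{HA}` of the Hartmann-Arguelles scheme. -/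
def bHA (A V : MPMat n) (lam : ℝ) (μ : WithBot ℝ) : MPMat n :=
  zeroRC A (haNodes A V lam μ)

/-- The node set `𝒢^{ct}` of the cycle threshold scheme. -/
def ctNodes (A : MPMat n) (lam : ℝ) (μ : WithBot ℝ) : Set (Fin n) :=
  unionSccMeeting (thrCT A μ) (critNodes A lam)

/-- The matrix `B^{ct}` of the cycle threshold scheme. -/
def bCT (A : MPMat n) (lam : ℝ) (μ : WithBot ℝ) : MPMat n :=
  zeroRC A (ctNodes A lam μ)

/-- The graph `𝒢^{ct}`: the union of the s.c.c.'s of `Θ^{ct}(μ^{ct})`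
intersecting `𝒞(A)`, as a digraph. -/
def ctSub (A : MPMat n) (lam : ℝ) (μ : WithBot ℝ) : SubD n :=
  ⟨ctNodes A lam μ,
   fun u v => (thrCT A μ).edge u v ∧ u ∈ ctNodes A lam μ ∧ v ∈ ctNodes A lam μ⟩

/-- The circumference of `G`: the greatest length of a cycle of `G`. -/
def circumf (G : SubD n) : ℕ := sSup {l | ∃ W, IsCycleIn G W ∧ W.length = l + 1}

/-- The cab driver's diameter of `G`: the greatest length of a path of `G`. -/
def cabDiam (G : SubD n) : ℕ := sSup {l | ∃ W, IsPathIn G W ∧ W.length = l + 1}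

/-- The girth of the s.c.c. of `v` in `G`: the least length of a cycle lying
in the s.c.c. of `v`. -/
def sccGirth (G : SubD n) (v : Fin n) : ℕ :=
  sInf {l | 0 < l ∧ ∃ W, IsCycleIn G W ∧ W.length = l + 1 ∧ ∀ u ∈ W, SccEq G v u}

/-- The max-girth of `G`: the greatest girth of an s.c.c. of `G`. -/
def maxGirth (G : SubD n) : ℕ := sSup {g | ∃ v ∈ G.verts, 0 < g ∧ g = sccGirth G v}

/-- The max-cyclicity of `G`: the greatest cyclicity of an s.c.c. of `G`. -/
def maxCyclicity (G : SubD n) : ℕ := sSup {c | ∃ v ∈ G.verts, 0 < c ∧ c = sccCyclicity G v}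

/-- The Wielandt number: `Wi(n) = (n-1)² + 1` for `n > 1`, `Wi(1) = 0`. -/
def wielandt (k : ℕ) : ℕ := if k ≤ 1 then 0 else (k - 1) ^ 2 + 1

/-- The set of finite entries of `A`. -/
def finEntries (A : MPMat n) : Set ℝ := {x | ∃ i j, A i j = (x : WithBot ℝ)}

/-- The least finite entry of `A`. -/
def minEnt (A : MPMat n) : ℝ := sInf (finEntries A)

/-- The greatest finite entry of `A`. -/
def maxEnt (A : MPMat n) : ℝ := sSup (finEntries A)

/-- `‖A‖`: the difference between the greatest and least finite entries. -/
def matNorm (A : MPMat n) : ℝ := maxEnt A - minEnt A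

/-- `n_B`: the size of the smallest square submatrix of `B` containing all
finite entries of `B`. -/
def nB (B : MPMat n) : ℕ := Set.ncard {i | ∃ j, B i j ≠ ⊥ ∨ B j i ≠ ⊥}

/-- `‖v‖`: the difference between the greatest and least entries of `v`. -/
def vecNorm (v : Fin n → ℝ) : ℝ := sSup (Set.range v) - sInf (Set.range v)

/-- The exploration penalty `ep^γ(i)` (w.r.t. the graph `crit`): the least `T`
such that for every multiple `t` of `γ` with `t ≥ T` there is a closed walk of
length `t` at `i` in `crit`. -/
def epAt (crit : SubD n) (γ : ℕ) (i : Fin n) : ℕ :=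
  sInf {T | ∀ t, γ ∣ t → T ≤ t → ∃ W, IsClosedWalkAt crit i W ∧ elen W = t}

/-- The exploration penalty `ep^γ(S)`: the maximum of `ep^γ(i)` over `i ∈ S`. -/
def epOn (crit : SubD n) (γ : ℕ) (S : Set (Fin n)) : ℕ := sSup {e | ∃ i ∈ S, e = epAt crit γ i}

/-- `ep(𝒞(A))`: the maximum over the s.c.c.'s `𝒞_l` of `crit` of
`ep^{γ(𝒞_l)}(𝒞_l)`. -/
def epCrit (crit : SubD n) : ℕ :=
  sSup {e | ∃ i ∈ crit.verts, e = epAt crit (sccCyclicity crit i) i}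

/-- The weak CSR expansion `A^t = λ^{⊗t}⊗(CS^tR) ⊕ B^t` holds at time `t`
(with CSR terms taken w.r.t. the subgraph `G`). -/
def weakCSReq (A B : MPMat n) (lam : ℝ) (G : SubD n) (t : ℕ) : Prop :=
  ∀ i j, mpPow A t i j = max (csr A lam G t i j + (((t : ℝ) * lam : ℝ) : WithBot ℝ)) (mpPow B t i j)

/-- The domination `λ^{⊗t}⊗(CS^tR) ≥ B^t` holds at time `t`. -/
def T2eq (A B : MPMat n) (lam : ℝ) (G : SubD n) (t : ℕ) : Prop :=
  ∀ i j, mpPow B t i j ≤ csr A lam G t i j + (((t : ℝ) * lam : ℝ) : WithBot ℝ)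

/-- The domination `λ^{⊗t}⊗(CS^tRv) ≥ B^t v` holds at time `t`. -/
def T2veq (A B : MPMat n) (lam : ℝ) (G : SubD n) (v : Fin n → ℝ) (t : ℕ) : Prop :=
  ∀ i, mpMulVec (mpPow B t) (fun j => (v j : WithBot ℝ)) i
      ≤ mpMulVec (csr A lam G t) (fun j => (v j : WithBot ℝ)) i + (((t : ℝ) * lam : ℝ) : WithBot ℝ)

/-- One step of removing a (nonempty) closed subwalk from a walk. -/
def RemoveStep (W V : List (Fin n)) : Prop :=
  ∃ (pre mid post : List (Fin n)) (x : Fin n),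
    W = pre ++ x :: mid ++ x :: post ∧ V = pre ++ x :: post

/-- One step of inserting a cycle of `C` into a walk (at an occurrence of a
node of that cycle). -/
def InsertStep (C : SubD n) (W V : List (Fin n)) : Prop :=
  ∃ (pre post mid : List (Fin n)) (x : Fin n),
    W = pre ++ x :: post ∧ V = pre ++ x :: mid ++ x :: post ∧ IsCycleIn C (x :: mid ++ [x])

/-- `V` is obtained from `W` by removing cycles. -/
def RemOnly : List (Fin n) → List (Fin n) → Prop := Relation.ReflTransGen RemoveStep

/-- `V` is obtained from `W` by removing cycles and possibly inserting cycles
of `C`. -/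
def RemIns (C : SubD n) : List (Fin n) → List (Fin n) → Prop :=
  Relation.ReflTransGen fun W V => RemoveStep W V ∨ InsertStep C W V

/-- `V` is obtained from `W` by removing at least one cycle and possibly
inserting cycles of `C`. -/
def RemInsStrict (C : SubD n) (W V : List (Fin n)) : Prop :=
  ∃ W₁ W₂, RemIns C W W₁ ∧ RemoveStep W₁ W₂ ∧ RemIns C W₂ V

/-- `T` witnesses the cycle removal threshold `T_cr^γ(C) ≤ T` in the digraph
`G`: every walk of `G` through `C` of length `≥ T` can be reduced (removing
cycles, possibly inserting cycles of `C`) to a walk through `C` with the same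
endpoints, the same length mod `γ`, and length `≤ T`. -/
def TcrProp (G C : SubD n) (γ T : ℕ) : Prop :=
  ∀ W, IsWalkIn G W → (∃ v ∈ C.verts, v ∈ W) → T ≤ elen W →
    ∃ V, RemIns C W V ∧ IsWalkIn G V ∧ (∃ v ∈ C.verts, v ∈ V) ∧
      V.head? = W.head? ∧ V.getLast? = W.getLast? ∧ elen V ≡ elen W [MOD γ] ∧ elen V ≤ T

/-- `T` witnesses the strict cycle removal threshold `T̃_cr^γ(C) ≤ T`. -/
def TcrStrictProp (G C : SubD n) (γ T : ℕ) : Prop :=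
  ∀ W, IsWalkIn G W → (∃ v ∈ C.verts, v ∈ W) → T ≤ elen W →
    ∃ V, RemInsStrict C W V ∧ IsWalkIn G V ∧ (∃ v ∈ C.verts, v ∈ V) ∧
      V.head? = W.head? ∧ V.getLast? = W.getLast? ∧ elen V ≡ elen W [MOD γ] ∧ elen V ≤ T

/-- The cycle removal threshold `T_cr^γ(C)` of the subgraph `C` in `G`. -/
def Tcr (G C : SubD n) (γ : ℕ) : ℕ := sInf {T | TcrProp G C γ T}

/-- The strict cycle removal threshold `T̃_cr^γ(C)` of the subgraph `C` in `G`. -/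
def TcrStrict (G C : SubD n) (γ : ℕ) : ℕ := sInf {T | TcrStrictProp G C γ T}

/-- The subgraph formed by the nodes and edges of the walk `W`. -/
def cycleSub (W : List (Fin n)) : SubD n :=
  ⟨{v | v ∈ W}, fun a b => (a, b) ∈ W.zip W.tail⟩

/-- The single-node subgraph `{i}` (with no edges). -/
def singleSub (i : Fin n) : SubD n := ⟨{i}, fun _ _ => False⟩

/-- `λ(M)` as an element of `ℝmax` (`-∞` if `𝒟(M)` has no cycle). -/
def lamW (M : MPMat n) : WithBot ℝ :=
  sSup {x : WithBot ℝ | ∃ W m, IsCycleIn (digr M) W ∧ meanIs M W m ∧ x = (m : WithBot ℝ)}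

end MaxPlus

/-!
Write `B = (-λ) ⊗ A`. The `(i, j)` entry of `C S^t R` is the largest `B`-weight of a walk from `i`
to `j` through a critical node whose length is `t` modulo the cyclicity, and closed walks in the
critical graph have weight `0` (each critical edge is undone by the rest of its critical cycle).
A walk through `𝒞(A)` that first meets `𝒞_ν` avoids `N_1 ∪ ⋯ ∪ N_{ν-1}`, so it is a walk of
`A^{(ν)}`; rerouting it along a closed critical walk of `𝒞_ν` makes it a term of
`C_ν S_ν^t R_ν`. Conversely `A^{(ν)} ≤ A` and `S_ν ≤ S`, and closed critical walks pad lengths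
divisible by `γ(𝒞_ν)` to lengths divisible by `γ(𝒞(A))`, because the closed walks at a node of a
strongly connected graph have all sufficiently large multiples of its cyclicity as lengths.
-/

namespace MaxPlus

variable {n : ℕ}

section WithBotReal

lemma finsetSup_add {ι : Type*} (s : Finset ι) (f : ι → WithBot ℝ) (c : WithBot ℝ) :
    s.sup f + c = s.sup fun k => f k + c :=
  Finset.apply_sup_eq_sup_comp_of_linearOrder (· + c) (fun _ _ h => add_le_add_left h c)
    (WithBot.bot_add c)

lemma add_finsetSup {ι : Type*} (s : Finset ι) (f : ι → WithBot ℝ) (c : WithBot ℝ) :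
    c + s.sup f = s.sup fun k => c + f k :=
  Finset.apply_sup_eq_sup_comp_of_linearOrder (c + ·) (fun _ _ h => add_le_add_right h c)
    (WithBot.add_bot c)

lemma iSup_add_le {ι : Sort*} [Nonempty ι] {x : ι → WithBot ℝ} {c L : WithBot ℝ}
    (h : ∀ m, x m + c ≤ L) : (⨆ m, x m) + c ≤ L := by
  induction c using WithBot.recBotCoe with
  | bot => simp
  | coe c =>
    have cancel : ∀ y : WithBot ℝ, y + c + ((-c : ℝ) : WithBot ℝ) = y := fun y => by
      rw [add_assoc, ← WithBot.coe_add, add_neg_cancel, WithBot.coe_zero, add_zero]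
    have hle : (⨆ m, x m) ≤ L + ((-c : ℝ) : WithBot ℝ) :=
      ciSup_le fun m => cancel (x m) ▸ add_le_add_left (h m) _
    calc (⨆ m, x m) + c ≤ L + ((-c : ℝ) : WithBot ℝ) + c := add_le_add_left hle _
      _ = L := by rw [add_assoc, ← WithBot.coe_add, neg_add_cancel, WithBot.coe_zero, add_zero]

lemma add_iSup_le {ι : Sort*} [Nonempty ι] {x : ι → WithBot ℝ} {c L : WithBot ℝ}
    (h : ∀ m, c + x m ≤ L) : c + ⨆ m, x m ≤ L := by
  rw [add_comm]
  exact iSup_add_le fun m => add_comm c (x m) ▸ h m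

end WithBotReal

section MatrixAlgebra

lemma le_mpMul (X Y : MPMat n) (i k j : Fin n) : X i k + Y k j ≤ mpMul X Y i j :=
  Finset.le_sup (f := fun k => X i k + Y k j) (Finset.mem_univ k)

lemma mpMul_assoc (X Y Z : MPMat n) : mpMul (mpMul X Y) Z = mpMul X (mpMul Y Z) := by
  funext i j
  simp only [mpMul, finsetSup_add, add_finsetSup, add_assoc]
  exact Finset.sup_comm _ _ _

lemma mpPow_zero_mpMul (X Y : MPMat n) : mpMul (mpPow X 0) Y = Y := by
  funext i j
  refine le_antisymm (Finset.sup_le fun k _ => ?_)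
    (by simpa [mpPow] using le_mpMul (mpPow X 0) Y i i j)
  by_cases hik : i = k <;> simp [mpPow, hik]

lemma mpPow_add (X : MPMat n) (a b : ℕ) :
    mpPow X (a + b) = mpMul (mpPow X a) (mpPow X b) := by
  induction a with
  | zero => rw [zero_add, mpPow_zero_mpMul]
  | succ a ih => rw [add_right_comm, mpPow, ih, ← mpMul_assoc]; rfl

lemma mpPow_mul (X : MPMat n) (a m : ℕ) : mpPow (mpPow X a) m = mpPow X (a * m) := by
  induction m with
  | zero => rfl
  | succ m ih => rw [mpPow, ih, Nat.mul_succ, add_comm, mpPow_add]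

lemma mpPow_add_le (X : MPMat n) (a b : ℕ) (i k j : Fin n) :
    mpPow X a i k + mpPow X b k j ≤ mpPow X (a + b) i j :=
  mpPow_add X a b ▸ le_mpMul _ _ i k j

lemma mpPow_mono {X Y : MPMat n} (h : ∀ i j, X i j ≤ Y i j) (t : ℕ) (i j : Fin n) :
    mpPow X t i j ≤ mpPow Y t i j := by
  induction t generalizing i j with
  | zero => rfl
  | succ t ih =>
    show mpMul X (mpPow X t) i j ≤ mpMul Y (mpPow Y t) i j
    exact Finset.sup_mono_fun fun k _ => add_le_add (h i k) (ih k j)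

end MatrixAlgebra

section SeqWeight

/-- Walks are handled as node sequences `f : ℕ → Fin n` read up to a length `t`; this is the
weight of `f 0 → f 1 → ⋯ → f t` in `𝒟(X)`. -/
def seqWeight (X : MPMat n) (f : ℕ → Fin n) (t : ℕ) : WithBot ℝ :=
  ∑ s ∈ Finset.range t, X (f s) (f (s + 1))

/-- `f` up to time `s`, then `g`; used when `f s = g 0`. -/
def seqAppend (f : ℕ → Fin n) (s : ℕ) (g : ℕ → Fin n) : ℕ → Fin n :=
  fun r => if r ≤ s then f r else g (r - s)

variable (X : MPMat n)

lemma seqWeight_zero (f : ℕ → Fin n) : seqWeight X f 0 = 0 := rfl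

lemma seqWeight_succ' (f : ℕ → Fin n) (t : ℕ) :
    seqWeight X f (t + 1) = X (f 0) (f 1) + seqWeight X (fun s => f (s + 1)) t := by
  rw [seqWeight, Finset.sum_range_succ', add_comm]
  rfl

lemma seqWeight_add (f : ℕ → Fin n) (s t : ℕ) :
    seqWeight X f (s + t) = seqWeight X f s + seqWeight X (fun r => f (s + r)) t := by
  rw [seqWeight, Finset.sum_range_add]
  rfl

lemma seqWeight_congr {f g : ℕ → Fin n} {t : ℕ} (h : ∀ s ≤ t, f s = g s) :
    seqWeight X f t = seqWeight X g t :=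
  Finset.sum_congr rfl fun s hs => by
    rw [h s (Finset.mem_range.1 hs).le, h (s + 1) (Finset.mem_range.1 hs)]

lemma seqWeight_congr_matrix {Y : MPMat n} {f : ℕ → Fin n} {t : ℕ}
    (h : ∀ s < t, X (f s) (f (s + 1)) = Y (f s) (f (s + 1))) :
    seqWeight X f t = seqWeight Y f t :=
  Finset.sum_congr rfl fun s hs => h s (Finset.mem_range.1 hs)

lemma seqWeight_ne_bot_iff {f : ℕ → Fin n} {t : ℕ} :
    seqWeight X f t ≠ ⊥ ↔ ∀ s < t, X (f s) (f (s + 1)) ≠ ⊥ := by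
  simp [seqWeight, WithBot.sum_eq_bot_iff]

lemma seqWeight_shiftMat (c : ℝ) (f : ℕ → Fin n) (t : ℕ) :
    seqWeight (shiftMat X c) f t = seqWeight X f t + ((t * c : ℝ) : WithBot ℝ) := by
  induction t with
  | zero => simp [seqWeight]
  | succ t ih =>
    simp only [seqWeight, Finset.sum_range_succ] at ih ⊢
    rw [ih, shiftMat, Nat.cast_succ, add_one_mul, WithBot.coe_add]
    abel

lemma seqAppend_of_le {f g : ℕ → Fin n} {s r : ℕ} (h : r ≤ s) : seqAppend f s g r = f r :=
  if_pos h

lemma seqAppend_add {f g : ℕ → Fin n} {s : ℕ} (hfg : f s = g 0) (r : ℕ) :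
    seqAppend f s g (s + r) = g r := by
  rcases Nat.eq_zero_or_pos r with rfl | hr
  · simpa [seqAppend] using hfg
  · simp [seqAppend, show ¬ s + r ≤ s by omega]

lemma seqWeight_seqAppend {f g : ℕ → Fin n} {s : ℕ} (hfg : f s = g 0) (t : ℕ) :
    seqWeight X (seqAppend f s g) (s + t) = seqWeight X f s + seqWeight X g t := by
  rw [seqWeight_add]
  congr 1
  · exact seqWeight_congr X fun r hr => seqAppend_of_le hr
  · exact seqWeight_congr X fun r _ => seqAppend_add hfg r

/-- Cutting the closed subwalk `f s → ⋯ → f s'` out of a walk. -/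
lemma seqWeight_eq_cut_add {f : ℕ → Fin n} {s s' t : ℕ} (hs : s ≤ s') (hs' : s' ≤ t)
    (heq : f s = f s') :
    seqWeight X f t = seqWeight X (seqAppend f s fun r => f (s' + r)) (s + (t - s'))
      + seqWeight X (fun r => f (s + r)) (s' - s) := by
  have hsplit := seqWeight_add X (fun r => f (s + r)) (s' - s) (t - s')
  simp only [← add_assoc, Nat.add_sub_cancel' hs] at hsplit
  have htotal : t = s + ((s' - s) + (t - s')) := by omega
  conv_lhs => rw [htotal, seqWeight_add X f s, hsplit]
  rw [seqWeight_seqAppend X (by simpa using heq)]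
  abel

lemma seqWeight_le_mpPow (f : ℕ → Fin n) (t : ℕ) : seqWeight X f t ≤ mpPow X t (f 0) (f t) := by
  induction t generalizing f with
  | zero => simp [seqWeight, mpPow]
  | succ t ih =>
    rw [seqWeight_succ']
    exact (add_le_add_right (ih _) _).trans (le_mpMul X (mpPow X t) _ (f 1) _)

lemma exists_seqWeight_eq_mpPow {t : ℕ} {i j : Fin n} (h : mpPow X t i j ≠ ⊥) :
    ∃ f : ℕ → Fin n, f 0 = i ∧ f t = j ∧ seqWeight X f t = mpPow X t i j := by
  induction t generalizing i with
  | zero =>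
    by_cases hij : i = j
    · exact ⟨fun _ => i, rfl, hij, by simp [seqWeight, mpPow, hij]⟩
    · simp [mpPow, hij] at h
  | succ t ih =>
    obtain ⟨k, -, hk⟩ := Finset.exists_mem_eq_sup Finset.univ ⟨i, Finset.mem_univ i⟩
      fun k => X i k + mpPow X t k j
    change mpMul X (mpPow X t) i j = X i k + mpPow X t k j at hk
    rw [mpPow, hk] at h ⊢
    obtain ⟨g, hg0, hgt, hgw⟩ := ih (WithBot.add_ne_bot.1 h).2
    refine ⟨fun s => Nat.casesOn s i g, rfl, hgt, ?_⟩
    rw [seqWeight_succ', ← hgw]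
    simp [hg0]

end SeqWeight

section Walks

def IsSeqWalk (G : SubD n) (f : ℕ → Fin n) (t : ℕ) : Prop :=
  (∀ s ≤ t, f s ∈ G.verts) ∧ ∀ s < t, G.edge (f s) (f (s + 1))

variable {G H : SubD n} {f g : ℕ → Fin n} {s t : ℕ}

lemma IsSeqWalk.append (hf : IsSeqWalk G f s) (hg : IsSeqWalk G g t) (hfg : f s = g 0) :
    IsSeqWalk G (seqAppend f s g) (s + t) := by
  constructor
  · intro r hr
    by_cases h : r ≤ s
    · rw [seqAppend_of_le h]; exact hf.1 r h
    · rw [← Nat.add_sub_cancel' (le_of_not_ge h), seqAppend_add hfg]; exact hg.1 _ (by omega)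
  · intro r hr
    by_cases h : r < s
    · rw [seqAppend_of_le h.le, seqAppend_of_le h]; exact hf.2 r h
    · obtain ⟨q, rfl⟩ := Nat.exists_eq_add_of_le (not_lt.1 h)
      rw [seqAppend_add hfg, show s + q + 1 = s + (q + 1) by omega, seqAppend_add hfg]
      exact hg.2 q (by omega)

lemma IsSeqWalk.drop (h : IsSeqWalk G f (s + t)) : IsSeqWalk G (fun r => f (s + r)) t :=
  ⟨fun r hr => h.1 _ (by omega), fun r hr => h.2 _ (by omega)⟩

lemma IsSeqWalk.take (h : IsSeqWalk G f t) (hs : s ≤ t) : IsSeqWalk G f s :=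
  ⟨fun r hr => h.1 r (hr.trans hs), fun r hr => h.2 r (hr.trans_le hs)⟩

lemma IsSeqWalk.mono (h : IsSeqWalk G f t) (hle : SubLE G H) : IsSeqWalk H f t :=
  ⟨fun r hr => hle.1 (h.1 r hr), fun r hr => hle.2 _ _ (h.2 r hr)⟩

lemma isSeqWalk_const {v : Fin n} (hv : v ∈ G.verts) : IsSeqWalk G (fun _ => v) 0 :=
  ⟨fun _ _ => hv, fun _ h => absurd h (Nat.not_lt_zero _)⟩

def ofSeq (f : ℕ → Fin n) (t : ℕ) : List (Fin n) := (List.range (t + 1)).map f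

lemma exists_eq_ofSeq {W : List (Fin n)} (hW : W ≠ []) : ∃ f t, W = ofSeq f t := by
  obtain ⟨d, -⟩ := List.exists_mem_of_ne_nil W hW
  have hlen : 0 < W.length := List.length_pos_iff.2 hW
  refine ⟨fun s => W.getD s d, W.length - 1, List.ext_getElem (by simp [ofSeq]; omega) ?_⟩
  intro s h _
  simp [ofSeq, List.getElem?_eq_getElem h]

lemma mem_ofSeq {v : Fin n} : v ∈ ofSeq f t ↔ ∃ s ≤ t, f s = v := by
  simp [ofSeq]

lemma head?_ofSeq : (ofSeq f t).head? = some (f 0) := by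
  simp [ofSeq, List.head?_range]

lemma getLast?_ofSeq : (ofSeq f t).getLast? = some (f t) := by
  simp [ofSeq, List.getLast?_range]

lemma elen_ofSeq : elen (ofSeq f t) = t := by
  simp [elen, ofSeq]

lemma zip_tail_ofSeq (f : ℕ → Fin n) (t : ℕ) :
    (ofSeq f t).zip (ofSeq f t).tail = (List.range t).map fun s => (f s, f (s + 1)) := by
  apply List.ext_getElem <;> simp [ofSeq]

lemma walkWeight_ofSeq (X : MPMat n) (f : ℕ → Fin n) (t : ℕ) :
    walkWeight X (ofSeq f t) = seqWeight X f t := by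
  rw [walkWeight, zip_tail_ofSeq, List.map_map]
  induction t with
  | zero => rfl
  | succ t ih =>
    rw [List.range_succ, List.map_append, List.sum_append, ih]
    simp [seqWeight, Finset.sum_range_succ]

lemma isWalkIn_ofSeq_iff : IsWalkIn G (ofSeq f t) ↔ IsSeqWalk G f t := by
  change (_ ∧ _ ∧ List.IsChain _ _) ↔ _
  simp only [IsSeqWalk, ofSeq, ne_eq, List.map_eq_nil_iff, List.range_eq_nil,
    List.mem_map, List.mem_range, forall_exists_index, and_imp, forall_apply_eq_imp_iff₂,
    Nat.lt_succ_iff, List.isChain_map, List.isChain_range_succ, Nat.succ_eq_add_one]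
  tauto

def HasWalk (G : SubD n) (u v : Fin n) (l : ℕ) : Prop :=
  ∃ f, IsSeqWalk G f l ∧ f 0 = u ∧ f l = v

lemma exists_isWalkIn_iff_hasWalk {u v : Fin n} {l : ℕ} :
    (∃ W, IsWalkIn G W ∧ W.head? = some u ∧ W.getLast? = some v ∧ elen W = l) ↔
      HasWalk G u v l := by
  constructor
  · rintro ⟨W, hW, hu, hv, rfl⟩
    obtain ⟨f, t, rfl⟩ := exists_eq_ofSeq hW.1
    rw [head?_ofSeq, Option.some_inj] at hu
    rw [getLast?_ofSeq, Option.some_inj] at hv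
    exact ⟨f, by rwa [elen_ofSeq, ← isWalkIn_ofSeq_iff], hu, by rwa [elen_ofSeq]⟩
  · rintro ⟨f, hf, rfl, rfl⟩
    exact ⟨ofSeq f l, isWalkIn_ofSeq_iff.2 hf, head?_ofSeq, getLast?_ofSeq, elen_ofSeq⟩

lemma reachIn_iff_hasWalk {u v : Fin n} : ReachIn G u v ↔ ∃ l, HasWalk G u v l := by
  simp only [ReachIn, ← exists_isWalkIn_iff_hasWalk]
  exact ⟨fun ⟨W, h⟩ => ⟨_, W, h.1, h.2.1, h.2.2, rfl⟩, fun ⟨_, W, h⟩ => ⟨W, h.1, h.2.1, h.2.2.1⟩⟩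

lemma closedWalk_iff_hasWalk {v : Fin n} {l : ℕ} :
    (∃ W, IsClosedWalkAt G v W ∧ elen W = l) ↔ HasWalk G v v l := by
  simp only [IsClosedWalkAt, ← exists_isWalkIn_iff_hasWalk, and_assoc]

lemma isCycleIn_ofSeq (hf : IsSeqWalk G f t) (ht : 0 < t) (hclosed : f t = f 0)
    (hinj : ∀ r < t, ∀ r' < t, f r = f r' → r = r') : IsCycleIn G (ofSeq f t) := by
  refine ⟨isWalkIn_ofSeq_iff.2 hf, by simp [ofSeq]; omega,
    by rw [head?_ofSeq, getLast?_ofSeq, hclosed], ?_⟩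
  rw [ofSeq, List.range_succ, List.map_append, List.map_singleton, List.dropLast_concat,
    List.nodup_map_iff_inj_on List.nodup_range]
  simpa using hinj

end Walks

section Reachability

variable {G : SubD n} {f : ℕ → Fin n} {s t : ℕ} {u v w x : Fin n}

lemma HasWalk.trans {a b : ℕ} (h₁ : HasWalk G u v a) (h₂ : HasWalk G v w b) :
    HasWalk G u w (a + b) := by
  obtain ⟨f, hf, rfl, rfl⟩ := h₁
  obtain ⟨g, hg, hg0, rfl⟩ := h₂
  exact ⟨_, hf.append hg hg0.symm, seqAppend_of_le (Nat.zero_le _), seqAppend_add hg0.symm b⟩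

lemma IsSeqWalk.reachIn (h : IsSeqWalk G f t) : ReachIn G (f 0) (f t) :=
  reachIn_iff_hasWalk.2 ⟨t, f, h, rfl, rfl⟩

lemma ReachIn.trans (h₁ : ReachIn G u v) (h₂ : ReachIn G v w) : ReachIn G u w := by
  obtain ⟨a, ha⟩ := reachIn_iff_hasWalk.1 h₁
  obtain ⟨b, hb⟩ := reachIn_iff_hasWalk.1 h₂
  exact reachIn_iff_hasWalk.2 ⟨a + b, ha.trans hb⟩

lemma ReachIn.mem_right (h : ReachIn G u v) : v ∈ G.verts := by
  obtain ⟨l, f, hf, -, rfl⟩ := reachIn_iff_hasWalk.1 h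
  exact hf.1 l le_rfl

lemma sccEq_refl (hv : v ∈ G.verts) : SccEq G v v :=
  have h : ReachIn G v v := (isSeqWalk_const hv).reachIn
  ⟨h, h⟩

lemma SccEq.symm (h : SccEq G u v) : SccEq G v u := ⟨h.2, h.1⟩

lemma SccEq.trans (h₁ : SccEq G u v) (h₂ : SccEq G v w) : SccEq G u w :=
  ⟨h₁.1.trans h₂.1, h₂.2.trans h₁.2⟩

lemma IsSeqWalk.reachIn_of_le (h : IsSeqWalk G f t) (hs : s ≤ t) : ReachIn G (f s) (f t) := by
  obtain ⟨q, rfl⟩ := Nat.exists_eq_add_of_le hs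
  exact h.drop.reachIn

lemma sccEq_of_isSeqWalk_closed (h : IsSeqWalk G f t) (hc : f t = f 0) (hs : s ≤ t) :
    SccEq G (f 0) (f s) :=
  ⟨(h.take hs).reachIn, hc ▸ h.reachIn_of_le hs⟩

lemma sccOf_subset_verts : sccOf G x ⊆ G.verts := fun _ hv => hv.1.mem_right

lemma sccSub_le : SubLE (sccSub G x) G := ⟨sccOf_subset_verts, fun _ _ h => h.1⟩

lemma IsSeqWalk.toSccSub (h : IsSeqWalk G f t) (h0 : f 0 ∈ sccOf G x) (ht : f t ∈ sccOf G x) :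
    IsSeqWalk (sccSub G x) f t := by
  have hmem : ∀ s ≤ t, f s ∈ sccOf G x := fun s hs =>
    ⟨h0.1.trans (h.take hs).reachIn, (h.reachIn_of_le hs).trans ht.2⟩
  exact ⟨hmem, fun s hs => ⟨h.2 s hs, hmem s hs.le, hmem (s + 1) hs⟩⟩

lemma exists_hasWalk_of_length
    (hout : ∀ v ∈ G.verts, ∃ w, G.edge v w ∧ w ∈ G.verts) (hu : u ∈ G.verts) (z : ℕ) :
    ∃ w, HasWalk G u w z := by
  induction z with
  | zero => exact ⟨u, _, isSeqWalk_const hu, rfl, rfl⟩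
  | succ z ih =>
    obtain ⟨w, f, hf, hf0, rfl⟩ := ih
    obtain ⟨w', hedge, hw'⟩ := hout _ (hf.1 z le_rfl)
    have hstep : HasWalk G (f z) w' 1 :=
      ⟨fun r => if r = 0 then f z else w',
        ⟨fun r hr => by interval_cases r <;> simp [hf.1 z le_rfl, hw'], by simpa using hedge⟩,
        rfl, rfl⟩
    have hwalk : HasWalk G (f 0) (f z) z := ⟨f, hf, rfl, rfl⟩
    exact ⟨w', hf0 ▸ hwalk.trans hstep⟩

end Reachability

section Cyclicity

variable {G : SubD n} {u v x : Fin n}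

lemma setGcd_eq_natSetGcd (S : Set ℕ) : setGcd S = Nat.setGcd S := by
  have hchar : {d | (∀ s ∈ S, d ∣ s) ∧ ∀ e, (∀ s ∈ S, e ∣ s) → e ∣ d} = {Nat.setGcd S} := by
    ext d
    simp only [Set.mem_ofPred_eq, Set.mem_singleton_iff, ← Nat.dvd_setGcd_iff]
    exact ⟨fun h => Nat.dvd_antisymm h.1 (h.2 _ dvd_rfl), fun h => h ▸ ⟨dvd_rfl, fun _ => id⟩⟩
  rw [setGcd, hchar, csInf_singleton]

lemma sccCyclicity_eq_setGcd (G : SubD n) (v : Fin n) :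
    sccCyclicity G v = Nat.setGcd {l | HasWalk G v v l} := by
  rw [sccCyclicity, setGcd_eq_natSetGcd]
  refine Nat.dvd_antisymm (Nat.dvd_setGcd_iff.2 fun l hl => ?_)
    (Nat.dvd_setGcd_iff.2 fun l hl => Nat.setGcd_dvd_of_mem (closedWalk_iff_hasWalk.1 hl.2))
  rcases Nat.eq_zero_or_pos l with rfl | hpos
  · exact dvd_zero _
  · exact Nat.setGcd_dvd_of_mem ⟨hpos, closedWalk_iff_hasWalk.2 hl⟩

lemma sccCyclicity_dvd {l : ℕ} (h : HasWalk G v v l) : sccCyclicity G v ∣ l := by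
  rw [sccCyclicity_eq_setGcd]
  exact Nat.setGcd_dvd_of_mem h

lemma exists_hasWalk_of_sccCyclicity_dvd (hv : v ∈ G.verts) :
    ∃ N, ∀ m ≥ N, sccCyclicity G v ∣ m → HasWalk G v v m := by
  obtain ⟨N, hN⟩ := Nat.exists_mem_closure_of_ge {l | HasWalk G v v l}
  refine ⟨N, fun m hm hdvd => ?_⟩
  refine AddSubmonoid.closure_induction (fun _ h => h) ?_ (fun _ _ _ _ ha hb => ha.trans hb)
    (hN m hm (sccCyclicity_eq_setGcd G v ▸ hdvd))
  exact ⟨fun _ => v, isSeqWalk_const hv, rfl, rfl⟩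

lemma sccCyclicity_dvd_of_sccEq (h : SccEq G u v) : sccCyclicity G v ∣ sccCyclicity G u := by
  obtain ⟨a, hvu⟩ := reachIn_iff_hasWalk.1 h.2
  obtain ⟨b, huv⟩ := reachIn_iff_hasWalk.1 h.1
  rw [sccCyclicity_eq_setGcd G u, Nat.dvd_setGcd_iff]
  intro l hl
  have hloop := sccCyclicity_dvd (hvu.trans (hl.trans huv))
  rwa [← add_assoc, add_right_comm, Nat.dvd_add_right (sccCyclicity_dvd (hvu.trans huv))]
    at hloop

lemma sccCyclicity_eq_of_sccEq (h : SccEq G u v) : sccCyclicity G u = sccCyclicity G v :=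
  Nat.dvd_antisymm (sccCyclicity_dvd_of_sccEq h.symm) (sccCyclicity_dvd_of_sccEq h)

lemma sccCyclicity_sccSub (hv : v ∈ sccOf G x) :
    sccCyclicity (sccSub G x) v = sccCyclicity G v := by
  simp only [sccCyclicity_eq_setGcd]
  congr 1
  ext l
  exact ⟨fun ⟨f, hf, h0, hl⟩ => ⟨f, hf.mono sccSub_le, h0, hl⟩,
    fun ⟨f, hf, h0, hl⟩ => ⟨f, hf.toSccSub (h0 ▸ hv) (hl ▸ hv), h0, hl⟩⟩

lemma setLcm_spec {S : Set ℕ} (hS : S.Finite) (hpos : ∀ s ∈ S, 0 < s) :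
    0 < setLcm S ∧ ∀ s ∈ S, s ∣ setLcm S := by
  have hprod : ∏ s ∈ hS.toFinset, s ∈ {m | 0 < m ∧ ∀ s ∈ S, s ∣ m} :=
    ⟨Finset.prod_pos fun s hs => hpos s (hS.mem_toFinset.1 hs),
      fun s hs => Finset.dvd_prod_of_mem _ (hS.mem_toFinset.2 hs)⟩
  exact Nat.sInf_mem ⟨_, hprod⟩

lemma setLcm_singleton {c : ℕ} (hc : 0 < c) : setLcm {c} = c := by
  obtain ⟨hpos, hdvd⟩ := setLcm_spec (Set.finite_singleton c) (by simpa using hc)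
  exact le_antisymm (Nat.sInf_le ⟨hc, by simp⟩) (Nat.le_of_dvd hpos (hdvd c rfl))

lemma graphCyclicity_pos_and_dvd (G : SubD n) :
    0 < graphCyclicity G ∧
      ∀ v ∈ G.verts, 0 < sccCyclicity G v → sccCyclicity G v ∣ graphCyclicity G := by
  have hfin : {c | ∃ v ∈ G.verts, c = sccCyclicity G v ∧ 0 < c}.Finite :=
    (Set.finite_range (sccCyclicity G)).subset fun _ ⟨v, _, hc, _⟩ => ⟨v, hc.symm⟩
  obtain ⟨hpos, hdvd⟩ := setLcm_spec hfin fun _ ⟨_, _, _, hc⟩ => hc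
  exact ⟨hpos, fun v hv hγ => hdvd _ ⟨v, hv, rfl, hγ⟩⟩

lemma graphCyclicity_sccSub (hx : x ∈ G.verts) (hpos : 0 < sccCyclicity G x) :
    graphCyclicity (sccSub G x) = sccCyclicity G x := by
  have hset : {c | ∃ v ∈ (sccSub G x).verts, c = sccCyclicity (sccSub G x) v ∧ 0 < c}
      = {sccCyclicity G x} := by
    ext c
    simp only [Set.mem_ofPred_eq, Set.mem_singleton_iff]
    constructor
    · rintro ⟨v, hv, rfl, -⟩
      exact (sccCyclicity_sccSub hv).trans (sccCyclicity_eq_of_sccEq hv).symm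
    · rintro rfl
      exact ⟨x, sccEq_refl hx, (sccCyclicity_sccSub (sccEq_refl hx)).symm, hpos⟩
  rw [graphCyclicity, hset, setLcm_singleton hpos]

end Cyclicity

section Critical

variable {A : MPMat n} {lam : ℝ} {u v x : Fin n}

lemma exists_seq_of_critical_cycle {W : List (Fin n)} (hW : IsCycleIn (digr A) W)
    (hm : meanIs A W lam) :
    ∃ f m, 0 < m ∧ f m = f 0 ∧ W = ofSeq f m ∧ IsSeqWalk (critSub A lam) f m ∧
      seqWeight (shiftMat A (-lam)) f m = 0 := by
  obtain ⟨f, m, rfl⟩ := exists_eq_ofSeq hW.1.1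
  have hlen := hW.2.1
  have hends := hW.2.2.1
  rw [head?_ofSeq, getLast?_ofSeq, Option.some_inj] at hends
  simp only [ofSeq, List.length_map, List.length_range] at hlen
  refine ⟨f, m, by omega, hends.symm, rfl,
    ⟨fun s hs => ⟨_, hW, hm, mem_ofSeq.2 ⟨s, hs, rfl⟩⟩,
      fun s hs => ⟨_, hW, hm, by rw [zip_tail_ofSeq]; exact List.mem_map.2 ⟨s, by simpa, rfl⟩⟩⟩, ?_⟩
  rw [meanIs, walkWeight_ofSeq, elen_ofSeq] at hm
  rw [seqWeight_shiftMat, hm, ← WithBot.coe_add, mul_neg, add_neg_cancel, WithBot.coe_zero]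

lemma exists_closed_critWalk (hu : u ∈ critNodes A lam) :
    ∃ m, 0 < m ∧ HasWalk (critSub A lam) u u m := by
  obtain ⟨W, hW, hm, huW⟩ := hu
  obtain ⟨f, m, hpos, hc, rfl, hf, -⟩ := exists_seq_of_critical_cycle hW hm
  obtain ⟨s, hs, rfl⟩ := mem_ofSeq.1 huW
  have hf' : IsSeqWalk (critSub A lam) f (s + (m - s)) := by rwa [Nat.add_sub_cancel' hs]
  have hjoin : f (s + (m - s)) = f 0 := by rw [Nat.add_sub_cancel' hs, hc]
  refine ⟨(m - s) + s, by omega, _, hf'.drop.append (hf.take hs) hjoin, rfl, ?_⟩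
  exact seqAppend_add (f := fun r => f (s + r)) hjoin s

lemma sccCyclicity_critSub_pos (hu : u ∈ critNodes A lam) :
    0 < sccCyclicity (critSub A lam) u :=
  let ⟨_, hpos, hw⟩ := exists_closed_critWalk hu
  Nat.pos_of_dvd_of_pos (sccCyclicity_dvd hw) hpos

lemma exists_sccSub_critSub_edge (hv : v ∈ sccOf (critSub A lam) x) :
    ∃ w, (sccSub (critSub A lam) x).edge v w ∧ w ∈ sccOf (critSub A lam) x := by
  obtain ⟨m, hpos, f, hf, rfl, hfm⟩ := exists_closed_critWalk (sccOf_subset_verts hv)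
  have hw : f 1 ∈ sccOf (critSub A lam) x := hv.trans (sccEq_of_isSeqWalk_closed hf hfm hpos)
  exact ⟨f 1, ⟨hf.2 0 hpos, hv, hw⟩, hw⟩

end Critical

section MaxCycleMean

variable {A : MPMat n} {lam : ℝ} {f : ℕ → Fin n} {t : ℕ} {u v : Fin n}

/-- A closed walk decomposes into cycles, each of normalized weight at most `0`. -/
lemma seqWeight_closed_nonpos (hlam : IsMaxCycleMean A lam) (hc : f t = f 0) :
    seqWeight (shiftMat A (-lam)) f t ≤ 0 := by
  induction t using Nat.strong_induction_on generalizing f with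
  | _ t ih =>
  rcases Nat.eq_zero_or_pos t with rfl | hpos
  · exact (seqWeight_zero _ f).le
  by_cases hbot : seqWeight (shiftMat A (-lam)) f t = ⊥
  · exact hbot ▸ bot_le
  by_cases hcut : ∃ s s', s < s' ∧ s' ≤ t ∧ s' - s < t ∧ f s = f s'
  · obtain ⟨s, s', hss', hs't, hlt, heq⟩ := hcut
    rw [seqWeight_eq_cut_add _ hss'.le hs't heq]
    refine add_nonpos (ih _ (by omega) ?_) (ih _ hlt (by simp [Nat.add_sub_cancel' hss'.le, heq]))
    rw [seqAppend_add (f := f) (g := fun r => f (s' + r)) (by simpa using heq),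
      seqAppend_of_le (Nat.zero_le s), Nat.add_sub_cancel' hs't, hc]
  push Not at hcut
  have hwalk : IsSeqWalk (digr A) f t :=
    ⟨fun _ _ => Set.mem_univ _, fun s hs hA => (seqWeight_ne_bot_iff _).1 hbot s hs
      (by simp [shiftMat, hA])⟩
  have hinj : ∀ r < t, ∀ r' < t, f r = f r' → r = r' := fun r hr r' hr' h => by
    by_contra hne
    rcases Nat.lt_or_gt_of_ne hne with hlt | hlt
    · exact hcut r r' hlt hr'.le (by omega) h
    · exact hcut r' r hlt hr.le (by omega) h.symm
  have hcycle := isCycleIn_ofSeq hwalk hpos hc hinj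
  obtain ⟨w, hw⟩ := WithBot.ne_bot_iff_exists.1 ((seqWeight_ne_bot_iff A).2 hwalk.2)
  have htpos : (0 : ℝ) < t := by exact_mod_cast hpos
  have hmean : meanIs A (ofSeq f t) (w / t) := by
    rw [meanIs, walkWeight_ofSeq, elen_ofSeq, ← hw, mul_div_cancel₀ _ htpos.ne']
  have hle : w ≤ t * lam := (div_le_iff₀' htpos).1 (hlam.2 _ _ hcycle hmean)
  rw [seqWeight_shiftMat, ← hw, ← WithBot.coe_add, ← WithBot.coe_zero, WithBot.coe_le_coe]
  linarith

/-- Cutting out closed subwalks, of weight `≤ 0`, shortens any walk to length at most `n`. -/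
lemma mpPow_le_sup_range (hlam : IsMaxCycleMean A lam) (t : ℕ) (i j : Fin n) :
    mpPow (shiftMat A (-lam)) t i j ≤
      (Finset.range (n + 1)).sup fun s => mpPow (shiftMat A (-lam)) s i j := by
  suffices key : ∀ t (f : ℕ → Fin n), seqWeight (shiftMat A (-lam)) f t ≤
      (Finset.range (n + 1)).sup fun s => mpPow (shiftMat A (-lam)) s (f 0) (f t) by
    by_cases hbot : mpPow (shiftMat A (-lam)) t i j = ⊥
    · exact hbot ▸ bot_le
    obtain ⟨f, rfl, rfl, hf⟩ := exists_seqWeight_eq_mpPow _ hbot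
    exact hf ▸ key t f
  intro t
  induction t using Nat.strong_induction_on with
  | _ t ih =>
  intro f
  by_cases htn : t ≤ n
  · exact (seqWeight_le_mpPow _ f t).trans
      (Finset.le_sup (f := fun s => mpPow (shiftMat A (-lam)) s (f 0) (f t))
        (Finset.mem_range.2 (Nat.lt_succ_of_le htn)))
  obtain ⟨a, b, hab, heq⟩ := Fintype.exists_ne_map_eq_of_card_lt (fun s : Fin (n + 1) => f s)
    (by simp)
  obtain ⟨s, s', hss', hs'n, heq⟩ : ∃ s s', s < s' ∧ s' ≤ n ∧ f s = f s' := by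
    rcases Nat.lt_or_gt_of_ne (Fin.val_ne_of_ne hab) with h | h
    · exact ⟨a, b, h, Nat.lt_succ_iff.1 b.2, heq⟩
    · exact ⟨b, a, h, Nat.lt_succ_iff.1 a.2, heq.symm⟩
  have hs't : s' ≤ t := by omega
  have hjoin : f s = (fun r => f (s' + r)) 0 := by simpa using heq
  rw [seqWeight_eq_cut_add _ hss'.le hs't heq]
  refine (add_le_of_le_of_nonpos (ih _ (by omega) _)
    (seqWeight_closed_nonpos hlam (by simp [Nat.add_sub_cancel' hss'.le, heq]))).trans_eq ?_
  rw [seqAppend_add hjoin, seqAppend_of_le (Nat.zero_le s), Nat.add_sub_cancel' hs't]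

lemma bddAbove_mpPow (hlam : IsMaxCycleMean A lam) (i j : Fin n) :
    BddAbove (Set.range fun t => mpPow (shiftMat A (-lam)) t i j) :=
  ⟨_, Set.forall_mem_range.2 fun t => mpPow_le_sup_range hlam t i j⟩

/-- The rest of a critical cycle through the critical edge `(u, v)` leads back from `v` to `u`. -/
lemma exists_return_of_critEdges (h : critEdges A lam u v) :
    ∃ g ℓ, g 0 = v ∧ g ℓ = u ∧
      shiftMat A (-lam) u v + seqWeight (shiftMat A (-lam)) g ℓ = 0 := by
  obtain ⟨W, hW, hm, huv⟩ := h
  obtain ⟨f, m, -, hc, rfl, -, hzero⟩ := exists_seq_of_critical_cycle hW hm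
  rw [zip_tail_ofSeq] at huv
  obtain ⟨s, hs, hfs⟩ := List.mem_map.1 huv
  simp only [List.mem_range, Prod.mk.injEq] at hs hfs
  obtain ⟨rfl, rfl⟩ := hfs
  set k := m - (s + 1)
  have hm : m = s + (1 + k) := by omega
  have hjoin : (fun r => f (s + 1 + r)) k = f 0 := by simp only [← hm, add_assoc, ← hc]
  refine ⟨seqAppend (fun r => f (s + 1 + r)) k f, k + s, by simp [seqAppend],
    seqAppend_add (f := fun r => f (s + 1 + r)) hjoin s, ?_⟩
  rw [hm, seqWeight_add, seqWeight_add] at hzero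
  rw [seqWeight_seqAppend _ (f := fun r => f (s + 1 + r)) hjoin, ← hzero]
  simp only [seqWeight, Finset.sum_range_one, add_zero, add_assoc]
  abel

lemma exists_return_of_critWalk (hf : IsSeqWalk (critSub A lam) f t) :
    ∃ g ℓ, g 0 = f t ∧ g ℓ = f 0 ∧
      seqWeight (shiftMat A (-lam)) f t + seqWeight (shiftMat A (-lam)) g ℓ = 0 := by
  induction t with
  | zero => exact ⟨fun _ => f 0, 0, rfl, rfl, by simp [seqWeight]⟩
  | succ t ih =>
    obtain ⟨g, ℓ, hg0, hgℓ, hg⟩ := ih (hf.take t.le_succ)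
    obtain ⟨h, k, hh0, hhk, hh⟩ := exists_return_of_critEdges (hf.2 t t.lt_succ_self)
    have hjoin : h k = g 0 := hhk.trans hg0.symm
    refine ⟨seqAppend h k g, k + ℓ, by rw [seqAppend_of_le (Nat.zero_le k), hh0],
      by rw [seqAppend_add hjoin, hgℓ], ?_⟩
    rw [seqWeight_seqAppend _ hjoin, seqWeight, Finset.sum_range_succ, ← seqWeight]
    calc _ = (seqWeight (shiftMat A (-lam)) f t + seqWeight (shiftMat A (-lam)) g ℓ)
          + (shiftMat A (-lam) (f t) (f (t + 1)) + seqWeight (shiftMat A (-lam)) h k) := by abel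
      _ = 0 := by rw [hg, hh, add_zero]

/-- The return walks of the edges of a critical walk, taken in reverse order, form a closed walk
of the opposite weight; both closed walks have weight `≤ 0`. -/
lemma seqWeight_closed_critWalk (hlam : IsMaxCycleMean A lam)
    (hf : IsSeqWalk (critSub A lam) f t) (hc : f t = f 0) :
    seqWeight (shiftMat A (-lam)) f t = 0 := by
  obtain ⟨g, ℓ, hg0, hgℓ, hsum⟩ := exists_return_of_critWalk hf
  have hg : seqWeight (shiftMat A (-lam)) g ℓ ≤ 0 :=
    seqWeight_closed_nonpos hlam (by rw [hgℓ, hg0, hc])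
  refine le_antisymm (seqWeight_closed_nonpos hlam hc) ?_
  calc (0 : WithBot ℝ) = _ := hsum.symm
    _ ≤ seqWeight (shiftMat A (-lam)) f t + 0 := add_le_add_right hg _
    _ = _ := add_zero _

end MaxCycleMean

section CSRTerms

variable {A : MPMat n} {lam : ℝ} {G : SubD n} {t : ℕ} {i j : Fin n}

lemma le_csr (k q : Fin n) :
    csrC A lam G i k + mpPow (csrS A lam G) t k q + csrR A lam G q j ≤ csr A lam G t i j :=
  (add_le_add_left (le_mpMul _ _ i k q) _).trans (le_mpMul _ _ i q j)

lemma csrM_eq_iSup (A : MPMat n) (lam : ℝ) (G : SubD n) (i j : Fin n) :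
    csrM A lam G i j = ⨆ m, mpPow (shiftMat A (-lam)) (graphCyclicity G * m) i j := by
  simp only [csrM, mpStar, mpPow_mul]

lemma csr_le {L : WithBot ℝ}
    (h : ∀ k ∈ G.verts, ∀ q ∈ G.verts, ∀ m₁ m₂,
      mpPow (shiftMat A (-lam)) (graphCyclicity G * m₁) i k + mpPow (csrS A lam G) t k q
        + mpPow (shiftMat A (-lam)) (graphCyclicity G * m₂) q j ≤ L) :
    csr A lam G t i j ≤ L := by
  refine Finset.sup_le (s := Finset.univ) (f := fun q =>
    mpMul (csrC A lam G) (mpPow (csrS A lam G) t) i q + csrR A lam G q j) fun q _ => ?_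
  rw [mpMul, finsetSup_add]
  refine Finset.sup_le fun k _ => ?_
  by_cases hk : k ∈ G.verts
  swap
  · simp [csrC, hk]
  by_cases hq : q ∈ G.verts
  swap
  · simp [csrR, hq]
  simp only [csrC, csrR, hk, hq, if_true, csrM_eq_iSup]
  refine add_iSup_le fun m₂ => ?_
  rw [add_assoc]
  exact iSup_add_le fun m₁ => by rw [← add_assoc]; exact h k hk q hq m₁ m₂

lemma le_csr_of_dvd
    (hbdd : ∀ i j, BddAbove (Set.range fun t => mpPow (shiftMat A (-lam)) t i j))
    {a b : ℕ} (ha : graphCyclicity G ∣ a) (hb : graphCyclicity G ∣ b) {k q : Fin n}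
    (hk : k ∈ G.verts) (hq : q ∈ G.verts) :
    mpPow (shiftMat A (-lam)) a i k + mpPow (csrS A lam G) t k q
      + mpPow (shiftMat A (-lam)) b q j ≤ csr A lam G t i j := by
  have hM : ∀ {c : ℕ}, graphCyclicity G ∣ c → ∀ u v,
      mpPow (shiftMat A (-lam)) c u v ≤ csrM A lam G u v := by
    rintro c ⟨m, rfl⟩ u v
    rw [csrM_eq_iSup]
    have hsub : (Set.range fun m => mpPow (shiftMat A (-lam)) (graphCyclicity G * m) u v)
        ⊆ Set.range fun t => mpPow (shiftMat A (-lam)) t u v :=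
      Set.range_subset_iff.2 fun m => Set.mem_range_self _
    exact le_ciSup ((hbdd u v).mono hsub) m
  refine le_trans ?_ (le_csr k q)
  simp only [csrC, csrR, hk, hq, if_true]
  exact add_le_add (add_le_add_left (hM ha i k) _) (hM hb q j)

end CSRTerms

section Decomposition

variable {A : MPMat n} {lam : ℝ} {Z : Set (Fin n)} {t : ℕ} {k x : Fin n}

lemma shiftMat_zeroRC_le (c : ℝ) (a b : Fin n) :
    shiftMat (zeroRC A Z) c a b ≤ shiftMat A c a b := by
  unfold shiftMat zeroRC
  split_ifs <;> simp

lemma shiftMat_zeroRC_of_notMem {a b : Fin n} (ha : a ∉ Z) (hb : b ∉ Z) (c : ℝ) :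
    shiftMat (zeroRC A Z) c a b = shiftMat A c a b := by
  simp [shiftMat, zeroRC, ha, hb]

lemma bddAbove_mpPow_zeroRC (hlam : IsMaxCycleMean A lam) (Z : Set (Fin n)) (i j : Fin n) :
    BddAbove (Set.range fun t => mpPow (shiftMat (zeroRC A Z) (-lam)) t i j) :=
  let ⟨K, hK⟩ := bddAbove_mpPow hlam i j
  ⟨K, Set.forall_mem_range.2 fun t =>
    (mpPow_mono (shiftMat_zeroRC_le _) t i j).trans (hK (Set.mem_range_self t))⟩

/-- `z = γ(𝒞(A)) (N + a) - a`, where all multiples of `γ(𝒞_k)` beyond `N` are lengths of closed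
critical walks at `k`, which have weight `0`. -/
lemma exists_add_dvd_graphCyclicity (hlam : IsMaxCycleMean A lam) (hk : k ∈ critNodes A lam) {a : ℕ}
    (ha : sccCyclicity (critSub A lam) k ∣ a) :
    ∃ z, graphCyclicity (critSub A lam) ∣ a + z ∧ 0 ≤ mpPow (shiftMat A (-lam)) z k k := by
  obtain ⟨hγpos, hγdvd⟩ := graphCyclicity_pos_and_dvd (critSub A lam)
  set γ := graphCyclicity (critSub A lam)
  obtain ⟨N, hN⟩ := exists_hasWalk_of_sccCyclicity_dvd (G := critSub A lam) hk
  have hle : a ≤ γ * (N + a) := (Nat.le_add_left a N).trans (Nat.le_mul_of_pos_left _ hγpos)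
  obtain ⟨c, hc, hc0, hcz⟩ := hN (γ * (N + a) - a) (by
      have := Nat.le_mul_of_pos_left (N + a) hγpos; omega)
    (Nat.dvd_sub ((hγdvd k hk (sccCyclicity_critSub_pos hk)).mul_right _) ha)
  refine ⟨γ * (N + a) - a, ⟨N + a, Nat.add_sub_cancel' hle⟩, ?_⟩
  rw [← seqWeight_closed_critWalk hlam hc (hcz.trans hc0.symm)]
  simpa only [hc0, hcz] using seqWeight_le_mpPow (shiftMat A (-lam)) c (γ * (N + a) - a)

lemma csrS_zeroRC_sccSub_le (a b : Fin n) :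
    csrS (zeroRC A Z) lam (sccSub (critSub A lam) x) a b ≤ csrS A lam (critSub A lam) a b := by
  unfold csrS
  split_ifs with h₁ h₂
  · exact add_le_add_left (by unfold zeroRC; split_ifs <;> simp) _
  · exact absurd h₁.1 h₂
  · exact bot_le
  · exact le_rfl

lemma csr_zeroRC_sccSub_le (hlam : IsMaxCycleMean A lam) (hx : x ∈ critNodes A lam)
    (t : ℕ) (i j : Fin n) :
    csr (zeroRC A Z) lam (sccSub (critSub A lam) x) t i j ≤ csr A lam (critSub A lam) t i j := by
  refine csr_le fun k hk q hq m₁ m₂ => ?_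
  have hγ : ∀ v ∈ sccOf (critSub A lam) x,
      graphCyclicity (sccSub (critSub A lam) x) = sccCyclicity (critSub A lam) v := fun v hv =>
    (graphCyclicity_sccSub hx (sccCyclicity_critSub_pos hx)).trans (sccCyclicity_eq_of_sccEq hv)
  obtain ⟨z₁, hz₁, hk₀⟩ := exists_add_dvd_graphCyclicity hlam (sccOf_subset_verts hk)
    (a := graphCyclicity (sccSub (critSub A lam) x) * m₁) (hγ k hk ▸ dvd_mul_right _ _)
  obtain ⟨z₂, hz₂, hq₀⟩ := exists_add_dvd_graphCyclicity hlam (sccOf_subset_verts hq)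
    (a := graphCyclicity (sccSub (critSub A lam) x) * m₂) (hγ q hq ▸ dvd_mul_right _ _)
  rw [add_comm] at hz₂
  calc _ ≤ mpPow (shiftMat A (-lam)) (graphCyclicity (sccSub (critSub A lam) x) * m₁) i k
        + mpPow (csrS A lam (critSub A lam)) t k q
        + mpPow (shiftMat A (-lam)) (graphCyclicity (sccSub (critSub A lam) x) * m₂) q j := by
        gcongr <;> apply mpPow_mono
        exacts [shiftMat_zeroRC_le _, csrS_zeroRC_sccSub_le, shiftMat_zeroRC_le _]
    _ ≤ mpPow (shiftMat A (-lam)) (graphCyclicity (sccSub (critSub A lam) x) * m₁ + z₁) i k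
        + mpPow (csrS A lam (critSub A lam)) t k q
        + mpPow (shiftMat A (-lam)) (z₂ + graphCyclicity (sccSub (critSub A lam) x) * m₂) q j := by
        gcongr
        · exact (le_add_of_nonneg_right hk₀).trans (mpPow_add_le _ _ _ i k k)
        · exact (le_add_of_nonneg_left hq₀).trans (mpPow_add_le _ _ _ q q j)
    _ ≤ _ := le_csr_of_dvd (bddAbove_mpPow hlam) hz₁ hz₂ (sccOf_subset_verts hk)
        (sccOf_subset_verts hq)

/-- A closed critical walk `w → k₁ → k₂ → w` inside `𝒞_x`, whose middle part has length `t` and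
whose first part pads `a` to a multiple of `γ(𝒞_x)`. -/
lemma exists_critical_loop (hlam : IsMaxCycleMean A lam) (hx : x ∈ critNodes A lam)
    (hZ : ∀ w ∈ sccOf (critSub A lam) x, w ∉ Z) {w : Fin n} (hw : w ∈ sccOf (critSub A lam) x)
    (a t : ℕ) :
    ∃ k₁ ∈ sccOf (critSub A lam) x, ∃ k₂ ∈ sccOf (critSub A lam) x, ∃ z c,
      sccCyclicity (critSub A lam) x ∣ a + z ∧ sccCyclicity (critSub A lam) x ∣ z + (t + c) ∧
      0 ≤ mpPow (shiftMat (zeroRC A Z) (-lam)) z w k₁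
        + mpPow (csrS (zeroRC A Z) lam (sccSub (critSub A lam) x)) t k₁ k₂
        + mpPow (shiftMat (zeroRC A Z) (-lam)) c k₂ w := by
  set G := sccSub (critSub A lam) x
  set B := shiftMat (zeroRC A Z) (-lam)
  set γ := sccCyclicity (critSub A lam) x
  have hB : ∀ {f m}, IsSeqWalk G f m → seqWeight B f m = seqWeight (shiftMat A (-lam)) f m :=
    fun hf => seqWeight_congr_matrix _ fun s hs =>
      shiftMat_zeroRC_of_notMem (hZ _ (hf.1 s hs.le)) (hZ _ (hf.1 (s + 1) hs)) _
  have hout : ∀ v ∈ G.verts, ∃ v', G.edge v v' ∧ v' ∈ G.verts :=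
    fun v hv => exists_sccSub_critSub_edge hv
  obtain ⟨k₁, f₁, hf₁, rfl, rfl⟩ := exists_hasWalk_of_length hout hw ((γ - 1) * a)
  obtain ⟨k₂, f₂, hf₂, hf₂0, rfl⟩ := exists_hasWalk_of_length hout (hf₁.1 _ le_rfl) t
  have hk₂ : f₂ t ∈ G.verts := hf₂.1 t le_rfl
  obtain ⟨c, f₃, hf₃, hf₃0, hf₃c⟩ := reachIn_iff_hasWalk.1 (SccEq.trans hk₂.symm hw).1
  replace hf₃ : IsSeqWalk G f₃ c := hf₃.toSccSub (hf₃0 ▸ hk₂) (hf₃c ▸ hw)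
  have hjoin₂ : f₂ t = f₃ 0 := hf₃0.symm
  have hjoin₁ : f₁ ((γ - 1) * a) = seqAppend f₂ t f₃ 0 := by
    rw [seqAppend_of_le (Nat.zero_le t), hf₂0]
  have hloop := (hf₁.append (hf₂.append hf₃ hjoin₂) hjoin₁).mono sccSub_le
  have hstart := seqAppend_of_le (f := f₁) (g := seqAppend f₂ t f₃) (Nat.zero_le ((γ - 1) * a))
  have hend : seqAppend f₁ ((γ - 1) * a) (seqAppend f₂ t f₃) ((γ - 1) * a + (t + c))
      = seqAppend f₁ ((γ - 1) * a) (seqAppend f₂ t f₃) 0 := by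
    rw [seqAppend_add hjoin₁, seqAppend_add hjoin₂, hf₃c, hstart]
  refine ⟨_, hf₁.1 _ le_rfl, _, hk₂, (γ - 1) * a, c, ?_, ?_, ?_⟩
  · have hγpos : 0 < γ := sccCyclicity_critSub_pos hx
    rw [Nat.sub_one_mul, Nat.add_sub_cancel' (Nat.le_mul_of_pos_left a hγpos)]
    exact dvd_mul_right γ a
  · have h := sccCyclicity_dvd ⟨_, hloop, hstart, hend.trans hstart⟩
    rwa [← sccCyclicity_eq_of_sccEq hw] at h
  have hS : seqWeight (csrS (zeroRC A Z) lam G) f₂ t = seqWeight (shiftMat A (-lam)) f₂ t :=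
    (seqWeight_congr_matrix _ fun s hs => if_pos (hf₂.2 s hs)).trans (hB hf₂)
  calc (0 : WithBot ℝ)
      = seqWeight B f₁ ((γ - 1) * a) + seqWeight (csrS (zeroRC A Z) lam G) f₂ t
          + seqWeight B f₃ c := by
        rw [← seqWeight_closed_critWalk hlam hloop hend, seqWeight_seqAppend _ hjoin₁,
          seqWeight_seqAppend _ hjoin₂, hS, hB hf₁, hB hf₃, add_assoc]
    _ ≤ _ := by
        gcongr
        · exact seqWeight_le_mpPow B f₁ _
        · exact hf₂0 ▸ seqWeight_le_mpPow _ f₂ t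
        · exact hf₃0 ▸ hf₃c ▸ seqWeight_le_mpPow B f₃ c

/-- Both ends are rerouted through `𝒞_x` along the loop of `exists_critical_loop`. -/
lemma mpPow_add_mpPow_le_csr_sccSub (hlam : IsMaxCycleMean A lam) (hx : x ∈ critNodes A lam)
    (hZ : ∀ w ∈ sccOf (critSub A lam) x, w ∉ Z) {w : Fin n} (hw : w ∈ sccOf (critSub A lam) x)
    {a b : ℕ} (hab : a + b ≡ t [MOD sccCyclicity (critSub A lam) x]) (i j : Fin n) :
    mpPow (shiftMat (zeroRC A Z) (-lam)) a i w + mpPow (shiftMat (zeroRC A Z) (-lam)) b w j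
      ≤ csr (zeroRC A Z) lam (sccSub (critSub A lam) x) t i j := by
  set B := shiftMat (zeroRC A Z) (-lam)
  set S := csrS (zeroRC A Z) lam (sccSub (critSub A lam) x)
  obtain ⟨k₁, hk₁, k₂, hk₂, z, c, hz, hloop, hzero⟩ := exists_critical_loop hlam hx hZ hw a t
  have hγ := graphCyclicity_sccSub hx (sccCyclicity_critSub_pos hx)
  have hcb : sccCyclicity (critSub A lam) x ∣ c + b := by
    have hab' := (ZMod.natCast_eq_natCast_iff _ _ _).2 hab
    rw [← ZMod.natCast_eq_zero_iff] at hz hloop ⊢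
    push_cast at hz hloop hab' ⊢
    linear_combination hloop - hz + hab'
  calc mpPow B a i w + mpPow B b w j
      ≤ mpPow B a i w + mpPow B b w j
          + (mpPow B z w k₁ + mpPow S t k₁ k₂ + mpPow B c k₂ w) := le_add_of_nonneg_right hzero
    _ = (mpPow B a i w + mpPow B z w k₁) + mpPow S t k₁ k₂ + (mpPow B c k₂ w + mpPow B b w j) := by
        abel
    _ ≤ mpPow B (a + z) i k₁ + mpPow S t k₁ k₂ + mpPow B (c + b) k₂ j := by
        gcongr <;> exact mpPow_add_le _ _ _ _ _ _
    _ ≤ _ := le_csr_of_dvd (bddAbove_mpPow_zeroRC hlam Z) (hγ ▸ hz) (hγ ▸ hcb) hk₁ hk₂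

end Decomposition

section Components

variable {A : MPMat n} {lam : ℝ} {L : ℕ} {r : Fin L → Fin n} {t : ℕ}

/-- `N_1 ∪ ⋯ ∪ N_{ν-1}`, where `r k` represents the `k`-th s.c.c. of `𝒞(A)`. -/
def sccsBefore (A : MPMat n) (lam : ℝ) (r : Fin L → Fin n) (ν : Fin L) : Set (Fin n) :=
  {w | ∃ k : Fin L, (k : ℕ) < ν ∧ w ∈ sccOf (critSub A lam) (r k)}

/-- A walk through `𝒞(A)` avoids the s.c.c.'s before the first one it visits, so it is a walk
of the corresponding `A^{(ν)}`. -/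
lemma seqWeight_le_sup_csr (hlam : IsMaxCycleMean A lam) (hmem : ∀ ν, r ν ∈ critNodes A lam)
    (hinj : ∀ ν ν', SccEq (critSub A lam) (r ν) (r ν') → ν = ν')
    (hcov : ∀ w ∈ critNodes A lam, ∃ ν, SccEq (critSub A lam) w (r ν))
    {W : ℕ → Fin n} {T s : ℕ} (hT : T ≡ t [MOD graphCyclicity (critSub A lam)]) (hs : s ≤ T)
    (hWs : W s ∈ critNodes A lam) :
    seqWeight (shiftMat A (-lam)) W T ≤ Finset.univ.sup fun ν =>
      csr (zeroRC A (sccsBefore A lam r ν)) lam (sccSub (critSub A lam) (r ν)) t (W 0) (W T) := by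
  set V := Finset.univ.filter fun ν => ∃ s ≤ T, W s ∈ sccOf (critSub A lam) (r ν)
  obtain ⟨ν₀, hν₀⟩ := hcov _ hWs
  have hV : V.Nonempty := ⟨ν₀, Finset.mem_filter.2 ⟨Finset.mem_univ _, s, hs, hν₀.symm⟩⟩
  set ν := V.min' hV
  obtain ⟨s₀, hs₀, hWs₀⟩ := (Finset.mem_filter.1 (V.min'_mem hV)).2
  have havoid : ∀ s ≤ T, W s ∉ sccsBefore A lam r ν := fun s hs ⟨k, hk, hWk⟩ =>
    not_le.2 hk (V.min'_le k (Finset.mem_filter.2 ⟨Finset.mem_univ _, s, hs, hWk⟩))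
  have hdisj : ∀ w ∈ sccOf (critSub A lam) (r ν), w ∉ sccsBefore A lam r ν :=
    fun w hw ⟨k, hk, hwk⟩ => hk.ne (congrArg Fin.val (hinj k ν (hwk.trans hw.symm)))
  have hdvd : sccCyclicity (critSub A lam) (r ν) ∣ graphCyclicity (critSub A lam) :=
    (graphCyclicity_pos_and_dvd _).2 _ (hmem ν) (sccCyclicity_critSub_pos (hmem ν))
  have hsplit : s₀ + (T - s₀) = T := Nat.add_sub_cancel' hs₀
  calc seqWeight (shiftMat A (-lam)) W T
      = seqWeight (shiftMat (zeroRC A (sccsBefore A lam r ν)) (-lam)) W (s₀ + (T - s₀)) := by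
        rw [hsplit]
        exact seqWeight_congr_matrix _ fun s hs =>
          (shiftMat_zeroRC_of_notMem (havoid s hs.le) (havoid (s + 1) hs) _).symm
    _ ≤ mpPow (shiftMat (zeroRC A (sccsBefore A lam r ν)) (-lam)) s₀ (W 0) (W s₀)
        + mpPow (shiftMat (zeroRC A (sccsBefore A lam r ν)) (-lam)) (T - s₀) (W s₀) (W T) := by
        rw [seqWeight_add]
        refine add_le_add (seqWeight_le_mpPow _ _ _) ?_
        simpa only [add_zero, hsplit] using seqWeight_le_mpPow _ (fun r => W (s₀ + r)) (T - s₀)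
    _ ≤ csr (zeroRC A (sccsBefore A lam r ν)) lam (sccSub (critSub A lam) (r ν)) t (W 0) (W T) :=
        mpPow_add_mpPow_le_csr_sccSub hlam (hmem ν) hdisj hWs₀
          (by rw [hsplit]; exact hT.of_dvd hdvd) _ _
    _ ≤ _ := Finset.le_sup (f := fun ν => csr (zeroRC A (sccsBefore A lam r ν)) lam
        (sccSub (critSub A lam) (r ν)) t (W 0) (W T)) (Finset.mem_univ ν)

lemma mpPow_add_mpPow_le_sup_csr (hlam : IsMaxCycleMean A lam)
    (hmem : ∀ ν, r ν ∈ critNodes A lam)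
    (hinj : ∀ ν ν', SccEq (critSub A lam) (r ν) (r ν') → ν = ν')
    (hcov : ∀ w ∈ critNodes A lam, ∃ ν, SccEq (critSub A lam) w (r ν))
    {a b : ℕ} (hab : a + b ≡ t [MOD graphCyclicity (critSub A lam)]) {k : Fin n}
    (hk : k ∈ critNodes A lam) (i j : Fin n) :
    mpPow (shiftMat A (-lam)) a i k + mpPow (shiftMat A (-lam)) b k j ≤ Finset.univ.sup fun ν =>
      csr (zeroRC A (sccsBefore A lam r ν)) lam (sccSub (critSub A lam) (r ν)) t i j := by
  by_cases h₁ : mpPow (shiftMat A (-lam)) a i k = ⊥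
  · rw [h₁, WithBot.bot_add]; exact bot_le
  by_cases h₂ : mpPow (shiftMat A (-lam)) b k j = ⊥
  · rw [h₂, WithBot.add_bot]; exact bot_le
  obtain ⟨f₁, rfl, hf₁a, hf₁⟩ := exists_seqWeight_eq_mpPow _ h₁
  obtain ⟨f₂, hf₂0, rfl, hf₂⟩ := exists_seqWeight_eq_mpPow _ h₂
  have hjoin : f₁ a = f₂ 0 := hf₁a.trans hf₂0.symm
  have key := seqWeight_le_sup_csr hlam hmem hinj hcov (W := seqAppend f₁ a f₂) hab
    (Nat.le_add_right a b) (by rwa [seqAppend_of_le le_rfl, hf₁a])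
  rwa [seqWeight_seqAppend _ hjoin, hf₁, hf₂, seqAppend_add hjoin, seqAppend_of_le (Nat.zero_le _)]
    at key

lemma csr_le_sup_csr (hlam : IsMaxCycleMean A lam) (hmem : ∀ ν, r ν ∈ critNodes A lam)
    (hinj : ∀ ν ν', SccEq (critSub A lam) (r ν) (r ν') → ν = ν')
    (hcov : ∀ w ∈ critNodes A lam, ∃ ν, SccEq (critSub A lam) w (r ν)) (t : ℕ) (i j : Fin n) :
    csr A lam (critSub A lam) t i j ≤ Finset.univ.sup fun ν =>
      csr (zeroRC A (sccsBefore A lam r ν)) lam (sccSub (critSub A lam) (r ν)) t i j := by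
  refine csr_le fun k hk q _ m₁ m₂ => ?_
  have hS : ∀ a b, csrS A lam (critSub A lam) a b ≤ shiftMat A (-lam) a b := fun a b => by
    unfold csrS
    split_ifs
    exacts [le_rfl, bot_le]
  have hmod : graphCyclicity (critSub A lam) * m₁ + (t + graphCyclicity (critSub A lam) * m₂)
      ≡ t [MOD graphCyclicity (critSub A lam)] := by
    simp [Nat.ModEq, Nat.add_mod]
  refine le_trans ?_ (mpPow_add_mpPow_le_sup_csr hlam hmem hinj hcov hmod hk i j)
  rw [add_assoc]
  exact add_le_add_right ((add_le_add_left (mpPow_mono hS t k q) _).trans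
    (mpPow_add_le _ _ _ _ _ _)) _

end Components

/-- (CSR decomposition over the critical s.c.c.'s.)
If `𝒞_1, …, 𝒞_L` are the s.c.c.'s of `𝒞(A)` (given by representatives
`r 1, …, r L`), and `A^{(ν)}` is obtained from `A` by zeroing out the rows and
columns of `𝒞_1 ∪ ⋯ ∪ 𝒞_{ν−1}`, then `CS^tR = ⊕_ν C_ν S_ν^t R_ν` where
`C_ν, S_ν, R_ν` are the CSR terms of `A^{(ν)}` w.r.t. `𝒞_ν` with normalization
`λ(A)`. -/
theorem csr_decomposition {n : ℕ} (A : MPMat n) (lam : ℝ)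
    (hlam : IsMaxCycleMean A lam)
    (L : ℕ) (r : Fin L → Fin n)
    (hmem : ∀ ν, r ν ∈ critNodes A lam)
    (hinj : ∀ ν ν', SccEq (critSub A lam) (r ν) (r ν') → ν = ν')
    (hcov : ∀ w ∈ critNodes A lam, ∃ ν, SccEq (critSub A lam) w (r ν)) :
    ∀ (t : ℕ) (i j : Fin n),
      csr A lam (critSub A lam) t i j =
        Finset.univ.sup (fun ν : Fin L =>
          csr (zeroRC A {w | ∃ k : Fin L, (k : ℕ) < (ν : ℕ) ∧ w ∈ sccOf (critSub A lam) (r k)})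
            lam (sccSub (critSub A lam) (r ν)) t i j) := fun t i j =>
  le_antisymm (csr_le_sup_csr hlam hmem hinj hcov t i j)
    (Finset.sup_le fun ν _ => csr_zeroRC_sccSub_le hlam (hmem ν) t i j)

end MaxPlus
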